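/- Consider finite strings over the alphabet {E, A, Ei, Ai} with the inductive Σ n / Π n classification (as in the arithmetical-hierarchy classification of quantifier-patterns: E, A, Ei, Ai are Σ 1, Π 1, Π 2, Σ 2; prepending E, A, Ei, Ai to a Σ n string gives Σ n, Π (n+1), Π (n+1), Σ (n+2); prepending them to a Π n string gives Σ (n+1), Π n, Π (n+2), Σ (n+1)). Define a rewriting relation on strings generated by: replacing one occurrence of Ei by the two letters A,E; replacing one occurrence of Ai by E,A; contracting an adjacent pair E,E to E; contracting an adjacent pair A,A to A; and inserting an arbitrary single letter at an arbitrary position. Then: if a string P is Σ n and P rewrites to Q by finitely many applications of these rules, then Q is Σ m for some m ≥ n, or Π m for some m > n. -/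
import Mathlib


/-- The four quantifiers: ∃, ∀, ∃^∞, ∀^∞. -/
inductive Quant
  | E | A | Ei | Ai
deriving DecidableEq

open Quant

mutual
/-- `IsSigma n w` : the quantifier-pattern `w` is Σ_n. -/
inductive IsSigma : ℕ → List Quant → Prop
  | baseE : IsSigma 1 [E]
  | baseAi : IsSigma 2 [Ai]
  | consE_sigma {n w} : IsSigma n w → IsSigma n (E :: w)
  | consAi_sigma {n w} : IsSigma n w → IsSigma (n + 2) (Ai :: w)
  | consE_pi {n w} : IsPi n w → IsSigma (n + 1) (E :: w)
  | consAi_pi {n w} : IsPi n w → IsSigma (n + 1) (Ai :: w)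

/-- `IsPi n w` : the quantifier-pattern `w` is Π_n. -/
inductive IsPi : ℕ → List Quant → Prop
  | baseA : IsPi 1 [A]
  | baseEi : IsPi 2 [Ei]
  | consA_sigma {n w} : IsSigma n w → IsPi (n + 1) (A :: w)
  | consEi_sigma {n w} : IsSigma n w → IsPi (n + 1) (Ei :: w)
  | consA_pi {n w} : IsPi n w → IsPi n (A :: w)
  | consEi_pi {n w} : IsPi n w → IsPi (n + 2) (Ei :: w)
end

/-- A single application of one of the rewriting rules, at an arbitrary position. -/
inductive Step : List Quant → List Quant → Prop
  | ei (a b : List Quant) : Step (a ++ [Ei] ++ b) (a ++ [A, E] ++ b)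
  | ai (a b : List Quant) : Step (a ++ [Ai] ++ b) (a ++ [E, A] ++ b)
  | ee (a b : List Quant) : Step (a ++ [E, E] ++ b) (a ++ [E] ++ b)
  | aa (a b : List Quant) : Step (a ++ [A, A] ++ b) (a ++ [A] ++ b)
  | ins (a b : List Quant) (q : Quant) : Step (a ++ b) (a ++ [q] ++ b)

/-- Transition function: class of `q :: w` from the class of `w`
(`none` = empty word, `some (true, n)` = Σ_n, `some (false, n)` = Π_n). -/
def qtrans : Quant → Option (Bool × ℕ) → Bool × ℕ
  | E, none => (true, 1)
  | A, none => (false, 1)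
  | Ei, none => (false, 2)
  | Ai, none => (true, 2)
  | E, some (true, n) => (true, n)
  | A, some (true, n) => (false, n + 1)
  | Ei, some (true, n) => (false, n + 1)
  | Ai, some (true, n) => (true, n + 2)
  | E, some (false, n) => (true, n + 1)
  | A, some (false, n) => (false, n)
  | Ei, some (false, n) => (false, n + 2)
  | Ai, some (false, n) => (true, n + 1)

/-- Classification of a word. -/
def cls : List Quant → Option (Bool × ℕ)
  | [] => none
  | q :: w => some (qtrans q (cls w))

lemma cls_append (a w : List Quant) :
    cls (a ++ w) = a.foldr (fun q d => some (qtrans q d)) (cls w) := by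
  induction a with
  | nil => rfl
  | cons q a ih => simp [cls, ih]

/-- Levels are always ≥ 1. -/
def okc : Option (Bool × ℕ) → Prop
  | none => True
  | some (_, n) => 1 ≤ n

lemma okc_trans (q : Quant) (c : Option (Bool × ℕ)) (h : okc c) :
    okc (some (qtrans q c)) := by
  rcases c with _ | ⟨b, m⟩
  · cases q <;> simp [qtrans, okc]
  · cases q <;> cases b <;> simp [qtrans, okc] at * <;> omega

lemma okc_cls (w : List Quant) : okc (cls w) := by
  induction w with
  | nil => trivial
  | cons q w ih => exact okc_trans q _ ih

lemma cls_of_isSigma_isPi (w : List Quant) :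
    (∀ n, IsSigma n w → cls w = some (true, n)) ∧
    (∀ n, IsPi n w → cls w = some (false, n)) := by
  induction w with
  | nil =>
    constructor <;> intro n h <;> cases h
  | cons q w ih =>
    obtain ⟨ih1, ih2⟩ := ih
    constructor <;> intro n h <;> cases h <;>
      first
        | rfl
        | (rename_i h'; simp [cls, qtrans, ih1 _ h'])
        | (rename_i h'; simp [cls, qtrans, ih2 _ h'])

lemma isSigma_isPi_of_cls (w : List Quant) :
    (∀ n, cls w = some (true, n) → IsSigma n w) ∧
    (∀ n, cls w = some (false, n) → IsPi n w) := by
  induction w with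
  | nil => constructor <;> intro n h <;> simp [cls] at h
  | cons q w ih =>
    obtain ⟨ih1, ih2⟩ := ih
    have hw : cls (q :: w) = some (qtrans q (cls w)) := rfl
    rcases hc : cls w with _ | ⟨b, m⟩
    · have hwnil : w = [] := by
        cases w with
        | nil => rfl
        | cons r w' => simp [cls] at hc
      subst hwnil
      constructor <;> intro n h <;> rw [hw, hc] at h <;>
        cases q <;> simp [qtrans] at h <;> subst h
      · exact IsSigma.baseE
      · exact IsSigma.baseAi
      · exact IsPi.baseA
      · exact IsPi.baseEi
    · constructor <;> intro n h <;> rw [hw, hc] at h <;>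
        cases b <;> cases q <;> simp [qtrans] at h <;> subst h <;>
        first
          | exact IsSigma.consE_sigma (ih1 _ hc)
          | exact IsSigma.consAi_sigma (ih1 _ hc)
          | exact IsSigma.consE_pi (ih2 _ hc)
          | exact IsSigma.consAi_pi (ih2 _ hc)
          | exact IsPi.consA_sigma (ih1 _ hc)
          | exact IsPi.consEi_sigma (ih1 _ hc)
          | exact IsPi.consA_pi (ih2 _ hc)
          | exact IsPi.consEi_pi (ih2 _ hc)

/-- The "does not drop level" relation on classes. -/
def Rc : Option (Bool × ℕ) → Option (Bool × ℕ) → Prop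
  | none, _ => True
  | some _, none => False
  | some (b, n), some (b', m) => if b = b' then n ≤ m else n < m

lemma Rc_refl (c : Option (Bool × ℕ)) : Rc c c := by
  rcases c with _ | ⟨b, n⟩ <;> simp [Rc]

lemma Rc_trans {c₁ c₂ c₃} (h₁ : Rc c₁ c₂) (h₂ : Rc c₂ c₃) : Rc c₁ c₃ := by
  rcases c₁ with _ | ⟨b₁, n₁⟩ <;> rcases c₂ with _ | ⟨b₂, n₂⟩ <;>
    rcases c₃ with _ | ⟨b₃, n₃⟩ <;> simp [Rc] at * <;>
    cases b₁ <;> cases b₂ <;> cases b₃ <;> simp at * <;> omega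

lemma Rc_insert (q : Quant) (c : Option (Bool × ℕ)) (h : okc c) :
    Rc c (some (qtrans q c)) := by
  rcases c with _ | ⟨b, n⟩
  · trivial
  · cases q <;> cases b <;> simp [qtrans, Rc, okc] at * <;> omega

lemma Rc_mono (q : Quant) {c c'} (hc : okc c) (hc' : okc c') (h : Rc c c') :
    Rc (some (qtrans q c)) (some (qtrans q c')) := by
  rcases c with _ | ⟨b, n⟩ <;> rcases c' with _ | ⟨b', m⟩
  · exact Rc_refl _
  · cases q <;> cases b' <;> simp [qtrans, Rc, okc] at * <;> omega
  · exact absurd h (by simp [Rc])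
  · cases q <;> cases b <;> cases b' <;> simp [qtrans, Rc, okc] at * <;> omega

lemma okc_run (a : List Quant) {c} (hc : okc c) :
    okc (a.foldr (fun q d => some (qtrans q d)) c) := by
  induction a with
  | nil => exact hc
  | cons r a ih => exact okc_trans r _ ih

lemma Rc_run (a : List Quant) {c c'} (hc : okc c) (hc' : okc c') (h : Rc c c') :
    Rc (a.foldr (fun q d => some (qtrans q d)) c)
       (a.foldr (fun q d => some (qtrans q d)) c') := by
  induction a with
  | nil => exact h
  | cons q a ih => exact Rc_mono q (okc_run a hc) (okc_run a hc') ih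

lemma cls_ei (b : List Quant) : cls ([Ei] ++ b) = cls ([A, E] ++ b) := by
  rcases hc : cls b with _ | ⟨bb, m⟩ <;> [skip; cases bb] <;>
    simp [cls, qtrans, hc]

lemma cls_ai (b : List Quant) : cls ([Ai] ++ b) = cls ([E, A] ++ b) := by
  rcases hc : cls b with _ | ⟨bb, m⟩ <;> [skip; cases bb] <;>
    simp [cls, qtrans, hc]

lemma cls_ee (b : List Quant) : cls ([E, E] ++ b) = cls ([E] ++ b) := by
  rcases hc : cls b with _ | ⟨bb, m⟩ <;> [skip; cases bb] <;>
    simp [cls, qtrans, hc]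

lemma cls_aa (b : List Quant) : cls ([A, A] ++ b) = cls ([A] ++ b) := by
  rcases hc : cls b with _ | ⟨bb, m⟩ <;> [skip; cases bb] <;>
    simp [cls, qtrans, hc]

lemma step_Rc {P Q : List Quant} (h : Step P Q) : Rc (cls P) (cls Q) := by
  cases h with
  | ei a b =>
    rw [List.append_assoc, List.append_assoc, cls_append a, cls_append a, cls_ei]
    exact Rc_refl _
  | ai a b =>
    rw [List.append_assoc, List.append_assoc, cls_append a, cls_append a, cls_ai]
    exact Rc_refl _
  | ee a b =>
    rw [List.append_assoc, List.append_assoc, cls_append a, cls_append a, cls_ee]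
    exact Rc_refl _
  | aa a b =>
    rw [List.append_assoc, List.append_assoc, cls_append a, cls_append a, cls_aa]
    exact Rc_refl _
  | ins a b q =>
    rw [List.append_assoc, cls_append a, cls_append a]
    have h1 : cls ([q] ++ b) = some (qtrans q (cls b)) := by simp [cls]
    rw [h1]
    exact Rc_run a (okc_cls b) (okc_trans q _ (okc_cls b))
      (Rc_insert q _ (okc_cls b))

/-- rewriting (absorption) preserves the arithmetical hierarchy level
in the stated sense. -/
theorem stmt_7 (P Q : List Quant) (n : ℕ) (hP : IsSigma n P)
    (hPQ : Relation.ReflTransGen Step P Q) :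
    (∃ m, n ≤ m ∧ IsSigma m Q) ∨ (∃ m, n < m ∧ IsPi m Q) := by
  have hcP : cls P = some (true, n) := (cls_of_isSigma_isPi P).1 n hP
  have hR : Rc (cls P) (cls Q) := by
    induction hPQ with
    | refl => exact Rc_refl _
    | tail _ hstep ih => exact Rc_trans ih (step_Rc hstep)
  rw [hcP] at hR
  rcases hcQ : cls Q with _ | ⟨b, m⟩
  · rw [hcQ] at hR; exact absurd hR (by simp [Rc])
  · rw [hcQ] at hR
    cases b
    · right
      refine ⟨m, ?_, (isSigma_isPi_of_cls Q).2 m hcQ⟩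
      simpa [Rc] using hR
    · left
      refine ⟨m, ?_, (isSigma_isPi_of_cls Q).1 m hcQ⟩
      simpa [Rc] using hR
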